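/- Let X be a nonnegative random variable with mean μ > 0 and Var(X) ≤ c²μ², let 0 < ε < 1, λ = ε(1-ε²)/(c²+ε²), and let X₁,...,Xₙ be iid copies of X. With Ψ_λ(m) = Σᵢ d_h(λ(Xᵢ/m - 1)), one has P(Ψ_λ((1+ε)μ) ≥ 0) ≤ [1 - (1/2)·ε²(1-ε²)/(c²+ε²)]^n. -/

import Mathlib

open MeasureTheory ProbabilityTheory Real

noncomputable def dh (u : ℝ) : ℝ :=
  if u > 1 then 5/6 else if u < -1 then -5/6 else u - u^3/6

lemma exp_le_quad_aux {x : ℝ} (hx : |x| ≤ 1) :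
    exp x ≤ 1 + x + x^2/2 + x^3/6 + 5/96 * x^4 := by
  have h := Real.exp_bound hx (n := 4) (by norm_num)
  have h2 := (abs_sub_le_iff.1 h).1
  have hx4 : |x| ^ 4 = x ^ 4 := by
    rw [← abs_pow, abs_of_nonneg (by positivity)]
  simp [Finset.sum_range_succ, Nat.factorial] at h2
  rw [hx4] at h2
  nlinarith [h2]

lemma exp_ge_aux : (2:ℝ) ≤ exp (5/6) := by
  have h := Real.exp_bound (x := 5/6) (by rw [abs_of_nonneg] <;> norm_num) (n := 3) (by norm_num)
  have h2 := (abs_sub_le_iff.1 h).2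
  have : |(5:ℝ)/6| = 5/6 := by rw [abs_of_nonneg] <;> norm_num
  rw [this] at h2
  simp [Finset.sum_range_succ, Nat.factorial] at h2
  nlinarith [h2]

lemma exp_le_aux : exp (5/6:ℝ) ≤ 5/2 := by
  have h := Real.exp_bound' (x := 5/6) (by norm_num) (by norm_num) (n := 4) (by norm_num)
  simp [Finset.sum_range_succ, Nat.factorial] at h
  nlinarith [h]

lemma dh_le (u : ℝ) : dh u ≤ 5/6 := by
  unfold dh
  split_ifs with h1 h2
  · norm_num
  · norm_num
  · push_neg at h1 h2
    nlinarith [mul_nonneg (by linarith : (0:ℝ) ≤ 1 - u) (by nlinarith : (0:ℝ) ≤ 5 - u - u^2)]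

lemma dh_ge (u : ℝ) : -(5/6) ≤ dh u := by
  unfold dh
  split_ifs with h1 h2
  · norm_num
  · norm_num
  · push_neg at h1 h2
    nlinarith [mul_nonneg (by linarith : (0:ℝ) ≤ 1 + u) (by nlinarith : (0:ℝ) ≤ 5 + u - u^2)]

lemma dh_meas : Measurable dh := by
  unfold dh
  refine Measurable.ite (measurableSet_lt measurable_const measurable_id) measurable_const ?_
  refine Measurable.ite (measurableSet_lt measurable_id measurable_const) measurable_const ?_
  fun_prop

lemma exp_dh_le (u : ℝ) : exp (dh u) ≤ 1 + u + u^2/2 := by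
  unfold dh
  split_ifs with h1 h2
  · calc exp ((5:ℝ)/6) ≤ 5/2 := exp_le_aux
      _ ≤ 1 + u + u^2/2 := by nlinarith
  · calc exp (-(5:ℝ)/6) ≤ 1/2 := by
          rw [show (-(5:ℝ)/6) = -(5/6) by ring, exp_neg]
          rw [inv_le_comm₀ (exp_pos _) (by norm_num)]
          simpa using exp_ge_aux
      _ ≤ 1 + u + u^2/2 := by nlinarith
  · push_neg at h1 h2
    have hu2 : u^2 ≤ 1 := by nlinarith
    have ha : (0:ℝ) ≤ (1+u)*(5+u-u^2) := mul_nonneg (by linarith) (by linarith)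
    have hb : (0:ℝ) ≤ (1-u)*(5-u-u^2) := mul_nonneg (by linarith) (by linarith)
    have hx : |u - u^3/6| ≤ 1 := by
      rw [abs_le]; constructor <;> nlinarith
    have h := exp_le_quad_aux hx
    refine h.trans ?_
    have habs : |u| ≤ 1 := abs_le.2 ⟨h2, h1⟩
    have hp : ∀ k : ℕ, -1 ≤ u^k ∧ u^k ≤ 1 := by
      intro k
      have hk : |u^k| ≤ 1 := by
        rw [abs_pow]; exact pow_le_one₀ (abs_nonneg u) habs
      exact ⟨(abs_le.1 hk).1, (abs_le.1 hk).2⟩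
    have h4 : (0:ℝ) ≤ u^4 := by positivity
    have t1 : (0:ℝ) ≤ u^4*(1+u) := mul_nonneg h4 (by linarith)
    have t2 : (0:ℝ) ≤ u^4*(1-u^2) := mul_nonneg h4 (by linarith)
    have t3 : (0:ℝ) ≤ u^4*(1+u^3) := mul_nonneg h4 (by linarith [(hp 3).1])
    have t4 : (0:ℝ) ≤ u^4*(1+u^5) := mul_nonneg h4 (by linarith [(hp 5).1])
    have hq : (1 - u^2/6)^4 ≤ 1 := by
      nlinarith [sq_nonneg (u^2/6), sq_nonneg (1-u^2/6), sq_nonneg ((1-u^2/6)^2), hu2]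
    have hxu : (u - u^3/6)^4 ≤ u^4 := by
      have he : (u - u^3/6)^4 = u^4 * (1 - u^2/6)^4 := by ring
      rw [he]
      nlinarith [mul_le_of_le_one_right h4 hq]
    nlinarith [t1, t2, t3, t4, h4, hxu]

theorem stmt_10 {Ω : Type*} [MeasureSpace Ω] [IsProbabilityMeasure (ℙ : Measure Ω)]
    (n : ℕ) (hn : 0 < n) (X : Fin n → Ω → ℝ) (X0 : Ω → ℝ) (μ c ε : ℝ)
    (hμ : 0 < μ) (hc : 0 < c) (hε : 0 < ε) (hε1 : ε < 1)
    (hX0 : MemLp X0 2 ℙ) (hpos : ∀ᵐ ω ∂(ℙ : Measure Ω), 0 ≤ X0 ω)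
    (hmean : (∫ ω, X0 ω) = μ) (hvar : variance X0 ℙ ≤ c^2 * μ^2)
    (hmeas : ∀ i, Measurable (X i))
    (hindep : iIndepFun X ℙ)
    (hident : ∀ i, Measure.map (X i) ℙ = Measure.map X0 ℙ) :
    (ℙ {ω | 0 ≤ ∑ i, dh ((ε * (1 - ε^2) / (c^2 + ε^2)) * (X i ω / ((1 + ε) * μ) - 1))}).toReal ≤
      (1 - (1/2) * (ε^2 * (1 - ε^2) / (c^2 + ε^2)))^n := by
  set l : ℝ := ε * (1 - ε^2) / (c^2 + ε^2) with hl
  set m : ℝ := (1 + ε) * μ with hm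
  set K : ℝ := 1 - (1/2) * (ε^2 * (1 - ε^2) / (c^2 + ε^2)) with hK
  have hm0 : 0 < m := mul_pos (by linarith) hμ
  have hden : (0:ℝ) < c^2 + ε^2 := by positivity
  set g : ℝ → ℝ := fun x => dh (l * (x / m - 1)) with hgdef
  have hgmeas : Measurable g := dh_meas.comp (by fun_prop)
  set Y : Fin n → Ω → ℝ := fun i ω => g (X i ω) with hYdef
  have hYmeas : ∀ i, Measurable (Y i) := fun i => hgmeas.comp (hmeas i)
  have hYindep : iIndepFun Y ℙ :=
    hindep.comp (fun _ => g) (fun _ => hgmeas)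
  have hSmeas : Measurable (fun ω => ∑ i, Y i ω) :=
    Finset.measurable_sum _ (fun i _ => hYmeas i)
  have hint : Integrable (fun ω => exp (1 * (∑ i, Y i) ω)) ℙ := by
    constructor
    · refine Measurable.aestronglyMeasurable ?_
      have : (fun ω => exp (1 * (∑ i, Y i) ω)) = fun ω => exp (1 * ∑ i, Y i ω) := by
        funext ω; rw [Finset.sum_apply]
      rw [this]; fun_prop
    · refine HasFiniteIntegral.of_bounded (C := exp (n * (5/6))) ?_
      filter_upwards with ω
      rw [Real.norm_eq_abs, abs_of_nonneg (exp_pos _).le, one_mul]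
      apply exp_le_exp.2
      rw [Finset.sum_apply]
      calc ∑ i, Y i ω ≤ ∑ _i : Fin n, (5/6:ℝ) :=
            Finset.sum_le_sum (fun i _ => dh_le _)
        _ = n * (5/6) := by rw [Finset.sum_const, Finset.card_univ, Fintype.card_fin,
            nsmul_eq_mul]
  have hchern := measure_ge_le_exp_mul_mgf (X := ∑ i, Y i) (μ := ℙ) (t := 1) 0 zero_le_one hint
  -- identify the event
  have hset : {ω | 0 ≤ ∑ i, dh (l * (X i ω / m - 1))} = {ω | (0:ℝ) ≤ (∑ i, Y i) ω} := by
    ext ω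
    simp only [Set.mem_setOf_eq, Finset.sum_apply, hYdef, hgdef]
  rw [hset]
  refine hchern.trans ?_
  rw [neg_mul, mul_zero, neg_zero, exp_zero, one_mul]
  rw [hYindep.mgf_sum hYmeas Finset.univ]
  -- per-coordinate bound
  have hi1 : Integrable X0 ℙ := hX0.integrable one_le_two
  have hi2 : Integrable (fun ω => X0 ω ^ 2) ℙ := by
    have := hX0.integrable_sq
    simpa [Pi.pow_apply] using this
  have hE2 : ∫ ω, X0 ω ^ 2 ≤ (c^2 + 1) * μ^2 := by
    have hv := variance_eq_sub hX0
    have : (∫ ω, (X0 ^ 2) ω) = ∫ ω, X0 ω ^ 2 := by simp [Pi.pow_apply]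
    rw [this] at hv
    rw [hmean] at hv
    nlinarith [hvar, hv]
  have hGmeas : Measurable (fun x => exp (g x)) := Real.measurable_exp.comp hgmeas
  have hBint : Integrable (fun ω => exp (g (X0 ω))) ℙ := by
    constructor
    · exact (hGmeas.comp_aemeasurable hX0.aestronglyMeasurable.aemeasurable).aestronglyMeasurable
    · refine HasFiniteIntegral.of_bounded (C := exp (5/6)) ?_
      filter_upwards with ω
      rw [Real.norm_eq_abs, abs_of_nonneg (exp_pos _).le]
      exact exp_le_exp.2 (dh_le _)
  have hq : Integrable (fun ω => (1 - l + l^2/2) + (l/m - l^2/m) * X0 ω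
      + (l^2/(2*m^2)) * X0 ω ^ 2) ℙ :=
    ((integrable_const _).add (hi1.const_mul _)).add (hi2.const_mul _)
  have hmono : ∫ ω, exp (g (X0 ω)) ≤ ∫ ω, ((1 - l + l^2/2) + (l/m - l^2/m) * X0 ω
      + (l^2/(2*m^2)) * X0 ω ^ 2) := by
    refine integral_mono hBint hq ?_
    intro ω
    have h := exp_dh_le (l * (X0 ω / m - 1))
    have he : 1 + (l * (X0 ω / m - 1)) + (l * (X0 ω / m - 1))^2/2
        = (1 - l + l^2/2) + (l/m - l^2/m) * X0 ω + (l^2/(2*m^2)) * X0 ω ^ 2 := by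
      field_simp
      ring
    simpa [hgdef, he] using h
  have hBval : ∫ ω, ((1 - l + l^2/2) + (l/m - l^2/m) * X0 ω
      + (l^2/(2*m^2)) * X0 ω ^ 2) ≤ K := by
    have hA : Integrable (fun _ : Ω => (1 - l + l^2/2)) ℙ := integrable_const _
    have hB' : Integrable (fun ω => (l/m - l^2/m) * X0 ω) ℙ := hi1.const_mul _
    have hC' : Integrable (fun ω => (l^2/(2*m^2)) * X0 ω ^ 2) ℙ := hi2.const_mul _
    have hAB : Integrable (fun ω => (1 - l + l^2/2) + (l/m - l^2/m) * X0 ω) ℙ := hA.add hB'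
    rw [integral_add hAB hC', integral_add hA hB',
      integral_const, integral_const_mul, integral_const_mul, hmean]
    simp only [measure_univ, probReal_univ, ENNReal.toReal_one, smul_eq_mul, one_mul]
    have hc2 : 0 ≤ l^2/(2*m^2) := by positivity
    have hstep : l^2/(2*m^2) * ∫ ω, X0 ω ^ 2 ≤ l^2/(2*m^2) * ((c^2+1)*μ^2) :=
      mul_le_mul_of_nonneg_left hE2 hc2
    have heq : (1 - l + l^2/2) + (l/m - l^2/m) * μ + l^2/(2*m^2) * ((c^2+1)*μ^2) = K := by
      rw [hK, hl, hm]
      field_simp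
      ring
    linarith [hstep, heq.le]
  have hper : ∀ i : Fin n, mgf (Y i) ℙ 1 ≤ K := by
    intro i
    have h1 : mgf (Y i) ℙ 1 = ∫ ω, exp (g (X i ω)) := by
      rw [mgf]; simp only [one_mul, hYdef]
    have h2 : ∫ ω, exp (g (X i ω)) = ∫ x, exp (g x) ∂(Measure.map (X i) ℙ) :=
      (integral_map (hmeas i).aemeasurable hGmeas.aestronglyMeasurable).symm
    have h3 : ∫ x, exp (g x) ∂(Measure.map (X i) ℙ) = ∫ ω, exp (g (X0 ω)) := by
      rw [hident i]
      exact integral_map hX0.aestronglyMeasurable.aemeasurable hGmeas.aestronglyMeasurable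
    rw [h1, h2, h3]
    exact hmono.trans hBval
  calc ∏ i : Fin n, mgf (Y i) ℙ 1 ≤ ∏ _i : Fin n, K :=
        Finset.prod_le_prod (fun i _ => mgf_nonneg) (fun i _ => hper i)
    _ = K ^ n := by rw [Finset.prod_const, Finset.card_univ, Fintype.card_fin]
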